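/- Let $h: X_A \to X_B$ be a homeomorphism giving a continuous orbit equivalence with data $(k_1,l_1)$ for $h$ and $(k_2,l_2)$ for $h^{-1}$. Then for all $x \in X_A$ and $p \in \mathbb{Z}_{\geq 0}$: $k_2^{l_1^p(x)}(h(x)) + l_2^{k_1^p(x)}(h(\sigma_A^p(x))) + p = k_2^{k_1^p(x)}(h(\sigma_A^p(x))) + l_2^{l_1^p(x)}(h(x))$. -/

import Mathlib

/-!
Iterating the orbit relations along `p` steps gives
`σ_B^{k_1^p(x)}(h(σ_A^p x)) = σ_B^{l_1^p(x)}(h x) =: y`, and pulling `y` back by `h⁻¹` along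
both descriptions expresses `σ_A^{k_2^{k_1^p(x)}}(h⁻¹ y)` and `σ_A^{k_2^{l_1^p(x)}}(h⁻¹ y)` as
shifts of `x`. Commuting these two shifts yields `σ_A^m x = σ_A^n x` with `m`, `n` the two sides
of the identity, so `m = n` whenever `x` is not eventually periodic. Both sides are continuous
`ℕ`-valued functions of `x`, so the identity extends from that dense set to all of `X_A`.
-/

open Function Finset

/-- The one-sided topological Markov shift space of a `{0,1}`-matrix `A`. -/
abbrev MarkovShift {N : ℕ} (A : Matrix (Fin N) (Fin N) (Fin 2)) :=
  {x : ℕ → Fin N // ∀ n : ℕ, A (x n) (x (n + 1)) = 1}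

/-- The shift map `σ_A` on the one-sided Markov shift. -/
def mshift {N : ℕ} (A : Matrix (Fin N) (Fin N) (Fin 2)) :
    MarkovShift A → MarkovShift A :=
  fun x => ⟨fun n => x.1 (n + 1), fun n => x.2 (n + 1)⟩

/-- Ergodic sums `f^n(x) = ∑_{i<n} f(σ^i x)`. -/
def esum {X : Type*} (σ : X → X) (f : X → ℕ) (n : ℕ) (x : X) : ℕ :=
  ∑ i ∈ Finset.range n, f (σ^[i] x)

lemma esum_succ {X : Type*} (σ : X → X) (f : X → ℕ) (n : ℕ) (x : X) :
    esum σ f (n + 1) x = esum σ f n (σ x) + f x := by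
  simp [esum, Finset.sum_range_succ', iterate_succ_apply]

lemma iterate_esum_of_orbit {X Y : Type*} {σX : X → X} {σY : Y → Y} {g : X → Y}
    {k l : X → ℕ} (horb : ∀ x, σY^[k x] (g (σX x)) = σY^[l x] (g x)) (n : ℕ) (x : X) :
    σY^[esum σX k n x] (g (σX^[n] x)) = σY^[esum σX l n x] (g x) := by
  induction n generalizing x with
  | zero => simp [esum]
  | succ n ih =>
    rw [esum_succ, esum_succ, iterate_succ_apply, add_comm, iterate_add_apply, ih,
      ← iterate_add_apply, add_comm, iterate_add_apply, horb, ← iterate_add_apply, add_comm]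

lemma esum_identity_of_not_eventually_periodic {X Y : Type*} {σX : X → X} {σY : Y → Y}
    (h : X ≃ Y) {k1 l1 : X → ℕ} {k2 l2 : Y → ℕ}
    (horb1 : ∀ x, σY^[k1 x] (h (σX x)) = σY^[l1 x] (h x))
    (horb2 : ∀ y, σX^[k2 y] (h.symm (σY y)) = σX^[l2 y] (h.symm y))
    {x : X} (hx : ¬ ∃ r s : ℕ, r ≠ s ∧ σX^[r] x = σX^[s] x) (p : ℕ) :
    esum σY k2 (esum σX l1 p x) (h x) + esum σY l2 (esum σX k1 p x) (h (σX^[p] x)) + p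
      = esum σY k2 (esum σX k1 p x) (h (σX^[p] x)) + esum σY l2 (esum σX l1 p x) (h x) := by
  set K := esum σX k1 p x
  set L := esum σX l1 p x
  set a := esum σY k2 K (h (σX^[p] x))
  set b := esum σY l2 K (h (σX^[p] x))
  set c := esum σY k2 L (h x)
  set d := esum σY l2 L (h x)
  set z := h.symm (σY^[L] (h x))
  have hza : σX^[a] z = σX^[b + p] x := by
    have := iterate_esum_of_orbit horb2 K (h (σX^[p] x))
    rw [iterate_esum_of_orbit horb1, h.symm_apply_apply] at this
    rw [this, iterate_add_apply]
  have hzc : σX^[c] z = σX^[d] x := by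
    simpa using iterate_esum_of_orbit horb2 L (h x)
  have hcomm : σX^[c + (b + p)] x = σX^[a + d] x := by
    rw [iterate_add_apply, ← hza, ← iterate_add_apply, add_comm, iterate_add_apply, hzc,
      ← iterate_add_apply]
  have hexp : c + (b + p) = a + d := by
    by_contra hne
    exact hx ⟨_, _, hne, hcomm⟩
  omega

lemma Continuous.apply_index_of_discrete {X Z ι : Type*} [TopologicalSpace X]
    [TopologicalSpace Z] [TopologicalSpace ι] [DiscreteTopology ι] {F : ι → X → Z}
    (hF : ∀ i, Continuous (F i)) {g : X → ι} (hg : Continuous g) :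
    Continuous fun x => F (g x) x :=
  continuous_iff_continuousAt.2 fun x => (hF (g x)).continuousAt.congr <| by
    filter_upwards [hg.continuousAt.eventually_mem ((isOpen_discrete {g x}).mem_nhds rfl)]
      with y hy
    rw [Set.mem_singleton_iff.1 hy]

lemma continuous_esum {X : Type*} [TopologicalSpace X] {σ : X → X} (hσ : Continuous σ)
    {f : X → ℕ} (hf : Continuous f) (n : ℕ) : Continuous (esum σ f n) :=
  continuous_finsetSum _ fun i _ => hf.comp (hσ.iterate i)

lemma Continuous.esum_comp {X Y : Type*} [TopologicalSpace X] [TopologicalSpace Y]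
    {σ : Y → Y} (hσ : Continuous σ) {f : Y → ℕ} (hf : Continuous f) {n : X → ℕ}
    (hn : Continuous n) {φ : X → Y} (hφ : Continuous φ) :
    Continuous fun x => esum σ f (n x) (φ x) :=
  Continuous.apply_index_of_discrete (fun m => (continuous_esum hσ hf m).comp hφ) hn

lemma continuous_mshift {N : ℕ} (A : Matrix (Fin N) (Fin N) (Fin 2)) :
    Continuous (mshift A) :=
  (continuous_pi fun n => (continuous_apply (n + 1)).comp continuous_subtype_val).subtype_mk
    (f := fun x : MarkovShift A => fun n => x.1 (n + 1)) _

theorem klp_identity_general {N M : ℕ}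
    (A : Matrix (Fin N) (Fin N) (Fin 2)) (B : Matrix (Fin M) (Fin M) (Fin 2))
    (hdenseA : Dense {x : MarkovShift A |
      ¬ ∃ r s : ℕ, r ≠ s ∧ (mshift A)^[r] x = (mshift A)^[s] x})
    (h : MarkovShift A ≃ₜ MarkovShift B)
    (k1 l1 : MarkovShift A → ℕ) (hk1 : Continuous k1) (hl1 : Continuous l1)
    (k2 l2 : MarkovShift B → ℕ) (hk2 : Continuous k2) (hl2 : Continuous l2)
    (horb1 : ∀ x, (mshift B)^[k1 x] (h (mshift A x)) = (mshift B)^[l1 x] (h x))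
    (horb2 : ∀ y, (mshift A)^[k2 y] (h.symm (mshift B y)) = (mshift A)^[l2 y] (h.symm y)) :
    ∀ (x : MarkovShift A) (p : ℕ),
      esum (mshift B) k2 (esum (mshift A) l1 p x) (h x) +
          esum (mshift B) l2 (esum (mshift A) k1 p x) (h ((mshift A)^[p] x)) + p
        = esum (mshift B) k2 (esum (mshift A) k1 p x) (h ((mshift A)^[p] x)) +
            esum (mshift B) l2 (esum (mshift A) l1 p x) (h x) := by
  intro x p
  have hσA := continuous_mshift A
  have hσB := continuous_mshift B
  have hK := continuous_esum hσA hk1 p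
  have hL := continuous_esum hσA hl1 p
  have hhp := h.continuous.comp (hσA.iterate p)
  refine congrFun (Continuous.ext_on hdenseA ?_ ?_
    fun x hx => esum_identity_of_not_eventually_periodic h.toEquiv horb1 horb2 hx p) x
  · exact ((hσB.esum_comp hk2 hL h.continuous).add
      (hσB.esum_comp hl2 hK hhp)).add continuous_const
  · exact (hσB.esum_comp hk2 hK hhp).add (hσB.esum_comp hl2 hL h.continuous)

/-- Lemma 3.3 of Matsumoto–Matui: the fundamental identity relating the
ergodic sums of the cocycle data of a continuous orbit equivalence and its inverse. -/
theorem klp_identity {N M : ℕ}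
    (A : Matrix (Fin N) (Fin N) (Fin 2)) (B : Matrix (Fin M) (Fin M) (Fin 2))
    (hdenseA : Dense {x : MarkovShift A |
      ¬ ∃ r s : ℕ, r ≠ s ∧ (mshift A)^[r] x = (mshift A)^[s] x})
    (hdenseB : Dense {y : MarkovShift B |
      ¬ ∃ r s : ℕ, r ≠ s ∧ (mshift B)^[r] y = (mshift B)^[s] y})
    (h : MarkovShift A ≃ₜ MarkovShift B)
    (k1 l1 : MarkovShift A → ℕ) (hk1 : Continuous k1) (hl1 : Continuous l1)
    (k2 l2 : MarkovShift B → ℕ) (hk2 : Continuous k2) (hl2 : Continuous l2)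
    (horb1 : ∀ x, (mshift B)^[k1 x] (h (mshift A x)) = (mshift B)^[l1 x] (h x))
    (horb2 : ∀ y, (mshift A)^[k2 y] (h.symm (mshift B y)) = (mshift A)^[l2 y] (h.symm y)) :
    ∀ (x : MarkovShift A) (p : ℕ),
      esum (mshift B) k2 (esum (mshift A) l1 p x) (h x) +
          esum (mshift B) l2 (esum (mshift A) k1 p x) (h ((mshift A)^[p] x)) + p
        = esum (mshift B) k2 (esum (mshift A) k1 p x) (h ((mshift A)^[p] x)) +
            esum (mshift B) l2 (esum (mshift A) l1 p x) (h x) :=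
  klp_identity_general A B hdenseA h k1 l1 hk1 hl1 k2 l2 hk2 hl2 horb1 horb2
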